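/- arXiv:2108.08270 — 4 statements merged into one kernel-verified Lean document; each statement's English description precedes it below -/
import Mathlib

section
/- Let τ > 2 and let ξ ∈ ℝ be diophantine of order τ, i.e. there exists γ > 0 with |ξ − p/q| ≥ γ·q^{−τ} for all p ∈ ℤ, q ∈ ℕ. Let r = p₀/q₀ ∈ ℚ with q₀ ∈ ℕ, and set β = e^{2πiξ}, λ = e^{2πir}, λ ≠ 1. Then for every k ∈ ℕ, 1/|β^k − λ| ≤ (q₀^τ/(4γ))·k^{τ−1}. -/
/-!
Write `β ^ k - λ = λ · (e^{2πi(kξ - r)} - 1)` with `|λ| = 1`. Jordan's inequality `|sin πt| ≥ 2|t|`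
for `|t| ≤ 1/2` bounds `|e^{2πix} - 1|` below by `4 |x - m|`, where `m` is the integer nearest to
`x`, and `|kξ - r - m| = k |ξ - (p₀ + m q₀)/(q₀ k)|` is bounded below by the diophantine condition.
-/

open Complex
open scoped Real

lemma norm_exp_two_pi_I_pow_sub_exp (a b : ℝ) (k : ℕ) :
    ‖exp (2 * π * I * a) ^ k - exp (2 * π * I * b)‖ = ‖exp (2 * π * I * (k * a - b)) - 1‖ := by
  have hfactor : exp (2 * π * I * a) ^ k - exp (2 * π * I * b)
      = exp (2 * π * I * b) * (exp (2 * π * I * (k * a - b)) - 1) := by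
    rw [← exp_nat_mul, mul_sub, ← exp_add, mul_one]
    ring_nf
  have hunit : ‖exp (2 * π * I * b)‖ = 1 := by
    simpa [mul_comm, mul_left_comm] using norm_exp_I_mul_ofReal (2 * π * b)
  rw [hfactor, norm_mul, hunit, one_mul]

lemma four_mul_abs_sub_round_le_norm_exp_sub_one (x : ℝ) :
    4 * |x - round x| ≤ ‖exp (2 * π * I * x) - 1‖ := by
  set t := x - round x
  have hperiodic : exp (2 * π * I * x) = exp (I * ↑(2 * π * t)) := by
    rw [show (2 * π * I * x : ℂ) = I * ↑(2 * π * t) + (round x : ℤ) * (2 * π * I) by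
      simp only [t]; push_cast; ring, exp_add, exp_int_mul_two_pi_mul_I, mul_one]
  have hjordan : 2 * |t| ≤ |Real.sin (π * t)| := by
    have h := Real.mul_abs_le_abs_sin (x := π * t) (by
      rw [abs_mul, abs_of_pos Real.pi_pos]
      nlinarith [Real.pi_pos, abs_sub_round x])
    rwa [abs_mul, abs_of_pos Real.pi_pos, ← mul_assoc, div_mul_cancel₀ _ Real.pi_pos.ne'] at h
  rw [hperiodic, norm_exp_I_mul_ofReal_sub_one, Real.norm_eq_abs, abs_mul, abs_two,
    show 2 * π * t / 2 = π * t by ring]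
  linarith

lemma le_rpow_mul_abs_nat_mul_sub_rat_sub_int {ξ γ τ : ℝ}
    (hdio : ∀ p : ℤ, ∀ q : ℕ, 0 < q → γ * (q : ℝ) ^ (-τ) ≤ |ξ - p / q|)
    (p₀ m : ℤ) {q₀ k : ℕ} (hq₀ : 0 < q₀) (hk : 0 < k) :
    γ ≤ (q₀ : ℝ) ^ τ * (k : ℝ) ^ (τ - 1) * |k * ξ - p₀ / q₀ - m| := by
  have hq₀R : (0 : ℝ) < q₀ := by exact_mod_cast hq₀
  have hkR : (0 : ℝ) < k := by exact_mod_cast hk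
  have hdist : ξ - ((p₀ + m * q₀ : ℤ) : ℝ) / ((q₀ * k : ℕ) : ℝ) = (k * ξ - p₀ / q₀ - m) / k := by
    push_cast
    field_simp
    ring
  have h := hdio (p₀ + m * q₀) (q₀ * k) (Nat.mul_pos hq₀ hk)
  rw [hdist, abs_div, abs_of_pos hkR, Real.rpow_neg (by positivity), ← div_eq_mul_inv,
    div_le_div_iff₀ (by positivity) hkR, Nat.cast_mul, Real.mul_rpow hq₀R.le hkR.le] at h
  rw [Real.rpow_sub_one hkR.ne', mul_div_assoc', div_mul_eq_mul_div, le_div_iff₀ hkR]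
  linarith

theorem stmt_11_general (τ : ℝ) (ξ : ℝ) (γ : ℝ) (hγ : 0 < γ)
    (hdio : ∀ p : ℤ, ∀ q : ℕ, 0 < q → γ * (q : ℝ) ^ (-τ) ≤ |ξ - p / q|)
    (p₀ : ℤ) (q₀ : ℕ) (hq₀ : 0 < q₀)
    (lam : ℂ) (hlam : lam = Complex.exp (2 * Real.pi * Complex.I * ((p₀ : ℝ) / q₀)))
    (β : ℂ) (hβ : β = Complex.exp (2 * Real.pi * Complex.I * ξ)) :
    ∀ k : ℕ, 0 < k →
      1 / ‖β ^ k - lam‖ ≤ ((q₀ : ℝ) ^ τ / (4 * γ)) * (k : ℝ) ^ (τ - 1) := by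
  intro k hk
  set x := k * ξ - p₀ / q₀
  have hnorm : ‖β ^ k - lam‖ = ‖exp (2 * π * I * x) - 1‖ := by
    have h := norm_exp_two_pi_I_pow_sub_exp ξ (p₀ / q₀) k
    rw [hβ, hlam]
    push_cast [x] at h ⊢
    exact h
  have hlower : 4 * |x - round x| ≤ ‖β ^ k - lam‖ :=
    hnorm ▸ four_mul_abs_sub_round_le_norm_exp_sub_one x
  set C := (q₀ : ℝ) ^ τ * (k : ℝ) ^ (τ - 1)
  have hdist : γ ≤ C * |x - round x| :=
    le_rpow_mul_abs_nat_mul_sub_rat_sub_int hdio p₀ (round x) hq₀ hk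
  have hC : 0 < C := by positivity
  have hkey : 4 * γ ≤ C * ‖β ^ k - lam‖ := calc
    4 * γ ≤ C * (4 * |x - round x|) := by linarith
    _ ≤ C * ‖β ^ k - lam‖ := by gcongr
  have hpos : 0 < ‖β ^ k - lam‖ := pos_of_mul_pos_right (by linarith) hC.le
  rw [div_mul_eq_mul_div, div_le_div_iff₀ hpos (by positivity)]
  linarith

theorem stmt_11 (τ : ℝ) (hτ : 2 < τ) (ξ : ℝ) (γ : ℝ) (hγ : 0 < γ)
    (hdio : ∀ p : ℤ, ∀ q : ℕ, 0 < q → γ * (q : ℝ) ^ (-τ) ≤ |ξ - p / q|)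
    (p₀ : ℤ) (q₀ : ℕ) (hq₀ : 0 < q₀)
    (lam : ℂ) (hlam : lam = Complex.exp (2 * Real.pi * Complex.I * ((p₀ : ℝ) / q₀)))
    (hlam1 : lam ≠ 1)
    (β : ℂ) (hβ : β = Complex.exp (2 * Real.pi * Complex.I * ξ)) :
    ∀ k : ℕ, 0 < k →
      1 / ‖β ^ k - lam‖ ≤ ((q₀ : ℝ) ^ τ / (4 * γ)) * (k : ℝ) ^ (τ - 1) :=
  stmt_11_general τ ξ γ hγ hdio p₀ q₀ hq₀ lam hlam β hβ
end

section
/- Let τ > 2 and ξ ∈ ℝ diophantine of order τ (∃ γ > 0: |ξ − p/q| ≥ γq^{−τ} for all p ∈ ℤ, q ∈ ℕ). Let β = e^{2πiξ} and λ = e^{2πir} with r ∈ ℚ and λ ≠ 1. Then limsup_{k→∞} (1/|β^k − λ|)^{1/k} ≤ 1, and consequently for every g ∈ Hol(𝔻) with g(z) = Σ aₙzⁿ, the series f(z) = Σ aₙ/(βⁿ − λ)·zⁿ defines an element of Hol(𝔻) satisfying f(βz) − λf(z) = g(z) on 𝔻. Hence λ is in the resolvent set of the composition operator C_φ f = f(β·)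 on Hol(𝔻). -/
/-! Write `e(x) = exp (2πix)`. For every integer `m`, `β^k - λ = λ (e(kξ - r - m) - 1)`, and
Jordan's inequality bounds `‖e(d) - 1‖` below by `4|d|` when `|d| ≤ 1/2`. Taking `m` nearest
to `kξ - r` and writing `r + m = p / den r`, the diophantine condition at `q = k · den r` gives
`|kξ - r - m| ≥ γ (den r)^(-τ) k^(1-τ)`, so `1 / |β^k - λ| = O(k^(τ-1))`. Polynomial growth
forces the `k`-th roots to have `limsup ≤ 1`, and multiplying the Taylor coefficients of `g` by
a polynomially bounded sequence keeps the power series convergent on the unit disc; the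
functional equation then holds term by term. -/

open Metric Filter Asymptotics Real Topology

lemma four_mul_abs_le_norm_exp_sub_one {d : ℝ} (hd : |d| ≤ 1 / 2) :
    4 * |d| ≤ ‖Complex.exp (Complex.I * (2 * π * d : ℝ)) - 1‖ := by
  have hπd : |π * d| ≤ π / 2 := by
    rw [abs_mul, abs_of_pos pi_pos]; nlinarith [pi_pos]
  rw [Complex.norm_exp_I_mul_ofReal_sub_one, norm_mul, Real.norm_eq_abs, Real.norm_eq_abs,
    show 2 * π * d / 2 = π * d by ring]
  calc 4 * |d| = 2 * (2 / π * |π * d|) := by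
        rw [abs_mul, abs_of_pos pi_pos]; field_simp; ring
    _ ≤ |2| * |sin (π * d)| := by
        rw [abs_two]; gcongr; exact mul_abs_le_abs_sin hπd

lemma norm_exp_two_pi_I_mul (x : ℝ) : ‖Complex.exp (2 * π * Complex.I * x)‖ = 1 := by
  rw [show (2 * π * Complex.I * x : ℂ) = ((2 * π * x : ℝ) : ℂ) * Complex.I by push_cast; ring]
  exact Complex.norm_exp_ofReal_mul_I _

lemma le_abs_nat_mul_sub_of_diophantine {τ ξ γ : ℝ}
    (hdio : ∀ p : ℤ, ∀ q : ℕ, 0 < q → γ * (q : ℝ) ^ (-τ) ≤ |ξ - p / q|)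
    (r : ℚ) (m : ℤ) {k : ℕ} (hk : 0 < k) :
    γ * (r.den : ℝ) ^ (-τ) * (k : ℝ) ^ (1 - τ) ≤ |k * ξ - r - m| := by
  have hk' : (0 : ℝ) < k := by exact_mod_cast hk
  have hden : (0 : ℝ) < r.den := by exact_mod_cast r.pos
  have h := hdio (r.num + m * r.den) (k * r.den) (Nat.mul_pos hk r.pos)
  have hfrac : ξ - ((r.num + m * r.den : ℤ) : ℝ) / ((k * r.den : ℕ) : ℝ)
      = (k * ξ - r - m) / k := by
    rw [Rat.cast_def]; push_cast; field_simp; ring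
  rw [hfrac, abs_div, abs_of_pos hk', le_div_iff₀ hk', Nat.cast_mul,
    Real.mul_rpow hk'.le hden.le] at h
  calc γ * (r.den : ℝ) ^ (-τ) * (k : ℝ) ^ (1 - τ)
      = γ * ((k : ℝ) ^ (-τ) * (r.den : ℝ) ^ (-τ)) * k := by
        rw [sub_eq_add_neg, Real.rpow_add hk', Real.rpow_one]; ring
    _ ≤ |k * ξ - r - m| := h

lemma exp_pow_sub_exp_eq (ξ x : ℝ) (m : ℤ) (k : ℕ) :
    Complex.exp (2 * π * Complex.I * ξ) ^ k - Complex.exp (2 * π * Complex.I * x)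
      = Complex.exp (2 * π * Complex.I * x)
        * (Complex.exp (Complex.I * (2 * π * (k * ξ - x - m) : ℝ)) - 1) := by
  rw [mul_sub, mul_one, ← Complex.exp_add, ← Complex.exp_nat_mul,
    ← mul_one (Complex.exp (_ + _)), ← Complex.exp_int_mul_two_pi_mul_I m, ← Complex.exp_add]
  congr 2
  push_cast; ring

lemma le_norm_exp_pow_sub_exp {τ ξ γ : ℝ}
    (hdio : ∀ p : ℤ, ∀ q : ℕ, 0 < q → γ * (q : ℝ) ^ (-τ) ≤ |ξ - p / q|)
    (r : ℚ) {k : ℕ} (hk : 0 < k) :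
    4 * γ * (r.den : ℝ) ^ (-τ) * (k : ℝ) ^ (1 - τ)
      ≤ ‖Complex.exp (2 * π * Complex.I * ξ) ^ k - Complex.exp (2 * π * Complex.I * (r : ℝ))‖ := by
  set m := round (k * ξ - r)
  rw [exp_pow_sub_exp_eq ξ r m k, norm_mul, norm_exp_two_pi_I_mul, one_mul, mul_assoc, mul_assoc]
  calc 4 * (γ * ((r.den : ℝ) ^ (-τ) * (k : ℝ) ^ (1 - τ))) ≤ 4 * |k * ξ - r - m| := by
        gcongr 4 * ?_; rw [← mul_assoc]; exact le_abs_nat_mul_sub_of_diophantine hdio r m hk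
    _ ≤ _ := four_mul_abs_le_norm_exp_sub_one (abs_sub_round _)

lemma isBigO_inv_exp_pow_sub_exp {τ ξ γ : ℝ} (hγ : 0 < γ)
    (hdio : ∀ p : ℤ, ∀ q : ℕ, 0 < q → γ * (q : ℝ) ^ (-τ) ≤ |ξ - p / q|) (r : ℚ) :
    (fun k : ℕ => (Complex.exp (2 * π * Complex.I * ξ) ^ k
        - Complex.exp (2 * π * Complex.I * (r : ℝ)))⁻¹) =O[atTop] fun k => (k : ℝ) ^ (τ - 1) := by
  have hden : (0 : ℝ) < r.den := by exact_mod_cast r.pos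
  set C := 4 * γ * (r.den : ℝ) ^ (-τ)
  have hC : 0 < C := by positivity
  refine IsBigO.of_bound C⁻¹ ?_
  filter_upwards [eventually_gt_atTop 0] with k hk
  have hk' : (0 : ℝ) < k := by exact_mod_cast hk
  rw [norm_inv, Real.norm_of_nonneg (by positivity), ← neg_sub 1 τ, Real.rpow_neg hk'.le,
    ← mul_inv]
  exact inv_anti₀ (by positivity) (le_norm_exp_pow_sub_exp hdio r hk)

lemma tendsto_const_mul_rpow_rpow_one_div {C : ℝ} (hC : 0 < C) (s : ℝ) :
    Tendsto (fun k : ℕ => (C * (k : ℝ) ^ s) ^ ((1 : ℝ) / k)) atTop (𝓝 1) := by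
  have hCk : Tendsto (fun k : ℕ => C ^ ((1 : ℝ) / k)) atTop (𝓝 1) := by
    simpa using tendsto_const_nhds.rpow (tendsto_const_div_atTop_nhds_zero_nat 1) (.inl hC.ne')
  have hk : Tendsto (fun k : ℕ => ((k : ℝ) ^ ((1 : ℝ) / k)) ^ s) atTop (𝓝 1) := by
    simpa using (tendsto_rpow_div.comp tendsto_natCast_atTop_atTop).rpow_const (.inl one_ne_zero)
  refine Tendsto.congr (fun k => ?_) (by simpa only [one_mul] using hCk.mul hk)
  rw [Real.mul_rpow hC.le (by positivity), ← Real.rpow_mul (Nat.cast_nonneg k),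
    ← Real.rpow_mul (Nat.cast_nonneg k), mul_comm s]

lemma limsup_rpow_one_div_le_one_of_isBigO {u : ℕ → ℝ} {s : ℝ} (hu : ∀ k, 0 ≤ u k)
    (h : u =O[atTop] fun k => (k : ℝ) ^ s) :
    limsup (fun k => u k ^ ((1 : ℝ) / k)) atTop ≤ 1 := by
  obtain ⟨C, hC, hCu⟩ := h.exists_pos
  have hle : ∀ᶠ k : ℕ in atTop, u k ^ ((1 : ℝ) / k) ≤ (C * (k : ℝ) ^ s) ^ ((1 : ℝ) / k) := by
    filter_upwards [hCu.bound] with k hk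
    rw [Real.norm_of_nonneg (hu k), Real.norm_of_nonneg (by positivity)] at hk
    exact Real.rpow_le_rpow (hu k) hk (by positivity)
  have hlim := tendsto_const_mul_rpow_rpow_one_div hC s
  calc limsup (fun k => u k ^ ((1 : ℝ) / k)) atTop
      ≤ limsup (fun k : ℕ => (C * (k : ℝ) ^ s) ^ ((1 : ℝ) / k)) atTop :=
        limsup_le_limsup hle (isCoboundedUnder_le_of_le atTop fun k => Real.rpow_nonneg (hu k) _)
          hlim.isBoundedUnder_le
    _ = 1 := hlim.limsup_eq

lemma summable_rpow_mul_geometric {t : ℝ} (ht₀ : 0 ≤ t) (ht : t < 1) (s : ℝ) :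
    Summable fun n : ℕ => (n : ℝ) ^ s * t ^ n := by
  refine summable_of_isBigO_nat (summable_pow_mul_geometric_of_norm_lt_one ⌈s⌉₊
    (by rwa [Real.norm_of_nonneg ht₀])) (IsBigO.of_bound 1 ?_)
  filter_upwards [eventually_ge_atTop 1] with n hn
  have hn' : (1 : ℝ) ≤ n := by exact_mod_cast hn
  rw [one_mul, Real.norm_of_nonneg (by positivity), Real.norm_of_nonneg (by positivity)]
  gcongr ?_ * _
  rw [← Real.rpow_natCast]
  exact Real.rpow_le_rpow_of_exponent_le hn' (Nat.le_ceil s)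

lemma summable_norm_mul_mul_pow_of_isBigO {a c : ℕ → ℂ} {s : ℝ}
    (ha : ∀ z ∈ ball (0 : ℂ) 1, Summable fun n => a n * z ^ n)
    (hc : c =O[atTop] fun n => (n : ℝ) ^ s) {ρ : ℝ} (hρ₀ : 0 ≤ ρ) (hρ : ρ < 1) :
    Summable fun n => ‖a n * c n‖ * ρ ^ n := by
  obtain ⟨w, hρw, hw⟩ := exists_between hρ
  have hw₀ : 0 < w := hρ₀.trans_lt hρw
  have hbdd : (fun n => a n * (w : ℂ) ^ n) =O[atTop] fun _ => (1 : ℝ) :=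
    (ha w (by simpa [abs_of_pos hw₀] using hw)).tendsto_atTop_zero.isBigO_one ℝ
  refine summable_of_isBigO_nat (summable_rpow_mul_geometric (div_nonneg hρ₀ hw₀.le)
    ((div_lt_one hw₀).2 hρw) s) ?_
  refine ((hbdd.mul hc).norm_left.mul (isBigO_refl (fun n => (ρ / w) ^ n) atTop)).congr
    (fun n => ?_) (fun n => by rw [one_mul])
  simp only [norm_mul, norm_pow, Complex.norm_real, Real.norm_of_nonneg hw₀.le, div_pow]
  field_simp

lemma summable_mul_pow_of_summable_norm_mul_pow {b : ℕ → ℂ}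
    (hb : ∀ ρ : ℝ, 0 ≤ ρ → ρ < 1 → Summable fun n => ‖b n‖ * ρ ^ n) {z : ℂ} (hz : ‖z‖ < 1) :
    Summable fun n => b n * z ^ n :=
  .of_norm (by simpa only [norm_mul, norm_pow] using hb ‖z‖ (norm_nonneg z) hz)

lemma differentiableOn_tsum_mul_pow {b : ℕ → ℂ}
    (hb : ∀ ρ : ℝ, 0 ≤ ρ → ρ < 1 → Summable fun n => ‖b n‖ * ρ ^ n) :
    DifferentiableOn ℂ (fun w => ∑' n, b n * w ^ n) (ball (0 : ℂ) 1) := by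
  intro z hz
  obtain ⟨ρ, hzρ, hρ⟩ := exists_between (mem_ball_zero_iff.mp hz)
  have hdiff : DifferentiableOn ℂ (fun w => ∑' n, b n * w ^ n) (ball (0 : ℂ) ρ) := by
    refine Complex.differentiableOn_tsum_of_summable_norm (hb ρ ((norm_nonneg z).trans hzρ.le) hρ)
      (fun n => (differentiable_const _ |>.mul (differentiable_pow n)).differentiableOn)
      isOpen_ball fun n w hw => ?_
    rw [norm_mul, norm_pow]
    gcongr
    exact (mem_ball_zero_iff.mp hw).le
  exact (hdiff.differentiableAt (isOpen_ball.mem_nhds (mem_ball_zero_iff.mpr hzρ)))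
    |>.differentiableWithinAt

lemma tsum_mul_pow_mul_sub_mul_tsum {a b : ℕ → ℂ} {β lam z : ℂ}
    (hβz : Summable fun n => b n * (β * z) ^ n) (hz : Summable fun n => b n * z ^ n)
    (hab : ∀ n, b n * (β ^ n - lam) = a n) :
    (∑' n, b n * (β * z) ^ n) - lam * ∑' n, b n * z ^ n = ∑' n, a n * z ^ n := by
  rw [← tsum_mul_left, ← hβz.tsum_sub (hz.mul_left lam)]
  exact tsum_congr fun n => by rw [← hab]; ring

theorem stmt_12_general (τ : ℝ) (ξ : ℝ) (γ : ℝ) (hγ : 0 < γ)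
    (hdio : ∀ p : ℤ, ∀ q : ℕ, 0 < q → γ * (q : ℝ) ^ (-τ) ≤ |ξ - p / q|)
    (r : ℚ)
    (lam : ℂ) (hlam : lam = Complex.exp (2 * Real.pi * Complex.I * (r : ℝ)))
    (hlam1 : lam ≠ 1)
    (β : ℂ) (hβ : β = Complex.exp (2 * Real.pi * Complex.I * ξ)) :
    Filter.limsup (fun k : ℕ => (1 / ‖β ^ k - lam‖) ^ ((1:ℝ)/k)) atTop ≤ 1 ∧
    ∀ (a : ℕ → ℂ) (g : ℂ → ℂ),
      (∀ z ∈ ball (0:ℂ) 1, HasSum (fun n : ℕ => a n * z ^ n) (g z)) →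
      (DifferentiableOn ℂ (fun w : ℂ => ∑' n : ℕ, a n / (β ^ n - lam) * w ^ n)
          (ball (0:ℂ) 1) ∧
        ∀ z ∈ ball (0:ℂ) 1,
          (∑' n : ℕ, a n / (β ^ n - lam) * (β * z) ^ n)
            - lam * (∑' n : ℕ, a n / (β ^ n - lam) * z ^ n) = g z) := by
  have hO : (fun k : ℕ => (β ^ k - lam)⁻¹) =O[atTop] fun k => (k : ℝ) ^ (τ - 1) := by
    subst hlam hβ; exact isBigO_inv_exp_pow_sub_exp hγ hdio r
  have hne : ∀ k : ℕ, β ^ k - lam ≠ 0 := by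
    rintro (_ | k)
    · rw [pow_zero, sub_ne_zero]; exact hlam1.symm
    · subst hlam hβ
      refine norm_pos_iff.mp (lt_of_lt_of_le ?_ (le_norm_exp_pow_sub_exp hdio r k.succ_pos))
      have : (0 : ℝ) < r.den := by exact_mod_cast r.pos
      positivity
  have hβ1 : ‖β‖ = 1 := hβ ▸ norm_exp_two_pi_I_mul ξ
  refine ⟨?_, fun a g hg => ?_⟩
  · simpa only [one_div, norm_inv] using
      limsup_rpow_one_div_le_one_of_isBigO (fun k => norm_nonneg _) hO.norm_left
  have hb : ∀ ρ : ℝ, 0 ≤ ρ → ρ < 1 → Summable fun n => ‖a n / (β ^ n - lam)‖ * ρ ^ n := by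
    simpa only [div_eq_mul_inv] using fun ρ =>
      summable_norm_mul_mul_pow_of_isBigO (fun z hz => (hg z hz).summable) hO (ρ := ρ)
  refine ⟨differentiableOn_tsum_mul_pow hb, fun z hz => ?_⟩
  have hz1 := mem_ball_zero_iff.mp hz
  rw [tsum_mul_pow_mul_sub_mul_tsum (a := a)
    (summable_mul_pow_of_summable_norm_mul_pow hb (by rwa [norm_mul, hβ1, one_mul]))
    (summable_mul_pow_of_summable_norm_mul_pow hb hz1) fun n => div_mul_cancel₀ _ (hne n)]
  exact (hg z hz).tsum_eq

theorem stmt_12 (τ : ℝ) (hτ : 2 < τ) (ξ : ℝ) (γ : ℝ) (hγ : 0 < γ)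
    (hdio : ∀ p : ℤ, ∀ q : ℕ, 0 < q → γ * (q : ℝ) ^ (-τ) ≤ |ξ - p / q|)
    (r : ℚ)
    (lam : ℂ) (hlam : lam = Complex.exp (2 * Real.pi * Complex.I * (r : ℝ)))
    (hlam1 : lam ≠ 1)
    (β : ℂ) (hβ : β = Complex.exp (2 * Real.pi * Complex.I * ξ)) :
    Filter.limsup (fun k : ℕ => (1 / ‖β ^ k - lam‖) ^ ((1:ℝ)/k)) atTop ≤ 1 ∧
    ∀ (a : ℕ → ℂ) (g : ℂ → ℂ),
      (∀ z ∈ ball (0:ℂ) 1, HasSum (fun n : ℕ => a n * z ^ n) (g z)) →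
      (DifferentiableOn ℂ (fun w : ℂ => ∑' n : ℕ, a n / (β ^ n - lam) * w ^ n)
          (ball (0:ℂ) 1) ∧
        ∀ z ∈ ball (0:ℂ) 1,
          (∑' n : ℕ, a n / (β ^ n - lam) * (β * z) ^ n)
            - lam * (∑' n : ℕ, a n / (β ^ n - lam) * z ^ n) = g z) :=
  stmt_12_general τ ξ γ hγ hdio r lam hlam hlam1 β hβ
end

section
/- Let β ∈ ℂ with |β| = 1, β^n ≠ 1 for all n ≥ 1, let m ∈ Hol(𝔻) with m(0) ≠ 0, and T f(z) = m(z)f(βz). Then for every n ∈ ℕ such that β^k ≠ 1 for k = 1,…,n, and every k ∈ {1,…,n}, the monomial e_k(z) = z^k does not belong to the range of the operator β^k m(0)·Id − T on Hol(𝔻). -/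
open Metric

/-!
If `f` solves `β ^ k m(0) f(z) - m(z) f(β z) = z ^ k` with `k ≥ 1`, evaluating at `0` gives
`(β ^ k - 1) m(0) f(0) = 0`, so `f(0) = 0` and `f = z f₁` with `f₁` holomorphic. Dividing the
equation by `z` shows that `β f₁` solves the same equation with `k - 1` in place of `k`; after `k`
steps one reaches `k = 0`, where evaluating at `0` yields `0 = 1`.
-/

/-- `f` is a holomorphic preimage of `z ^ k` under `β ^ k m(0) - T`, where `T f (z) = m(z) f(β z)`. -/
def SolvesMonomialEq (β : ℂ) (m : ℂ → ℂ) (k : ℕ) (f : ℂ → ℂ) : Prop :=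
  DifferentiableOn ℂ f (ball 0 1) ∧
    ∀ z ∈ ball (0 : ℂ) 1, β ^ k * m 0 * f z - m z * f (β * z) = z ^ k

lemma mul_mem_ball_zero {β z : ℂ} {r : ℝ} (hβ : ‖β‖ ≤ 1) (hz : z ∈ ball (0 : ℂ) r) :
    β * z ∈ ball (0 : ℂ) r := by
  rw [mem_ball_zero_iff, norm_mul] at *
  exact (mul_le_of_le_one_left (norm_nonneg z) hβ).trans_lt hz

lemma Set.EqOn.of_eqOn_diff_singleton {X Y : Type*} [TopologicalSpace X] [TopologicalSpace Y]
    [T2Space Y] {f g : X → Y} {s : Set X} {a : X} [(nhdsWithin a {a}ᶜ).NeBot]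
    (h : Set.EqOn f g (s \ {a})) (hs : IsOpen s) (hf : ContinuousOn f s) (hg : ContinuousOn g s) :
    Set.EqOn f g s :=
  h.of_subset_closure hf hg Set.sdiff_subset
    ((dense_compl_singleton a).open_subset_closure_inter hs)

namespace SolvesMonomialEq

variable {β : ℂ} {m f : ℂ → ℂ} {k : ℕ}

lemma apply_zero (h : SolvesMonomialEq β m k f) (hk : k ≠ 0) (hβk : β ^ k ≠ 1)
    (hm0 : m 0 ≠ 0) : f 0 = 0 := by
  have h0 := h.2 0 (mem_ball_self one_pos)
  rw [mul_zero, zero_pow hk] at h0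
  have : (β ^ k - 1) * m 0 * f 0 = 0 := by linear_combination h0
  simpa [sub_eq_zero, hβk, hm0] using this

theorem dslope_zero (h : SolvesMonomialEq β m (k + 1) f) (hβ : ‖β‖ ≤ 1)
    (hm : DifferentiableOn ℂ m (ball 0 1)) (hβk : β ^ (k + 1) ≠ 1) (hm0 : m 0 ≠ 0) :
    SolvesMonomialEq β m k (fun z => β * dslope f 0 z) := by
  have hf0 : f 0 = 0 := h.apply_zero k.succ_ne_zero hβk hm0
  have hf : ∀ z, f z = z * dslope f 0 z := fun z => by
    simpa [hf0] using (sub_smul_dslope f 0 z).symm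
  have hd : DifferentiableOn ℂ (dslope f 0) (ball 0 1) :=
    (Complex.differentiableOn_dslope (ball_mem_nhds 0 one_pos)).mpr h.1
  have hmaps : Set.MapsTo (β * ·) (ball (0 : ℂ) 1) (ball 0 1) := fun z hz =>
    mul_mem_ball_zero hβ hz
  refine ⟨hd.const_mul β, ?_⟩
  refine Set.EqOn.of_eqOn_diff_singleton (a := 0) (fun z ⟨hz, hz0⟩ => ?_) isOpen_ball ?_ ?_
  · apply mul_left_cancel₀ hz0
    have heq := h.2 z hz
    rw [hf z, hf (β * z)] at heq
    linear_combination heq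
  · have hdβ := (hd.comp (differentiableOn_id.const_mul β) hmaps).continuousOn
    exact (continuousOn_const.mul (hd.continuousOn.const_mul β)).sub
      (hm.continuousOn.mul (hdβ.const_mul β))
  · exact (continuous_pow k).continuousOn

end SolvesMonomialEq

theorem not_solvesMonomialEq {β : ℂ} {m f : ℂ → ℂ} {k : ℕ} (hβ : ‖β‖ ≤ 1)
    (hm : DifferentiableOn ℂ m (ball 0 1)) (hm0 : m 0 ≠ 0) (hβk : ∀ j, 1 ≤ j → j ≤ k → β ^ j ≠ 1) : ¬ SolvesMonomialEq β m k f := by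
  induction k generalizing f with
  | zero =>
    intro h
    simpa using h.2 0 (mem_ball_self one_pos)
  | succ k ih =>
    intro h
    exact ih (fun j hj hjk => hβk j hj (hjk.trans k.le_succ))
      (h.dslope_zero hβ hm (hβk (k + 1) k.succ_pos le_rfl) hm0)

theorem stmt_14_general (β : ℂ) (hβ : ‖β‖ = 1)
    (m : ℂ → ℂ) (hm : DifferentiableOn ℂ m (ball (0:ℂ) 1))
    (hm0 : m 0 ≠ 0)
    (n : ℕ) (hn : ∀ k : ℕ, 1 ≤ k → k ≤ n → β ^ k ≠ 1) :
    ∀ k : ℕ, 1 ≤ k → k ≤ n →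
      ¬ ∃ f : ℂ → ℂ, DifferentiableOn ℂ f (ball (0:ℂ) 1) ∧
        ∀ z ∈ ball (0:ℂ) 1, β ^ k * m 0 * f z - m z * f (β * z) = z ^ k := by
  rintro k - hkn ⟨f, hf⟩
  exact not_solvesMonomialEq hβ.le hm hm0
    (fun j hj hjk => hn j hj (hjk.trans hkn)) hf

theorem stmt_14 (β : ℂ) (hβ : ‖β‖ = 1)
    (haper : ∀ n : ℕ, 1 ≤ n → β ^ n ≠ 1)
    (m : ℂ → ℂ) (hm : DifferentiableOn ℂ m (ball (0:ℂ) 1))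
    (hm0 : m 0 ≠ 0)
    (n : ℕ) (hn : ∀ k : ℕ, 1 ≤ k → k ≤ n → β ^ k ≠ 1) :
    ∀ k : ℕ, 1 ≤ k → k ≤ n →
      ¬ ∃ f : ℂ → ℂ, DifferentiableOn ℂ f (ball (0:ℂ) 1) ∧
        ∀ z ∈ ball (0:ℂ) 1, β ^ k * m 0 * f z - m z * f (β * z) = z ^ k :=
  stmt_14_general β hβ m hm hm0 n hn
end

section
/- Let β ∈ ℂ with |β| = 1 and β^n ≠ 1 for all n ≥ 1, and let λ ∈ ℂ with 0 < |λ| < 1. Then there is no f ∈ Hol(𝔻) satisfying z·f(βz) − λ·f(z) = 1 for all z ∈ 𝔻. That is, λ lies in the spectrum of the operator Tf(z) = z·f(βz) on Hol(𝔻). -/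
open Metric Filter Topology Nat

/-! Comparing Taylor coefficients at `0` in `z f(βz) - λ f(z) = 1` gives `λ a₀ = -1` and
`λ aₙ₊₁ = βⁿ aₙ`, so `|λ|ⁿ⁺¹ |aₙ| = 1`. Hence the terms `aₙ λⁿ` of the Taylor series at the point
`λ` of the unit disc have constant norm `1 / |λ|` and cannot tend to `0`. -/

theorem eq_zero_of_eventually_hasSum_pow_smul_zero
    {𝕜 : Type*} [NontriviallyNormedField 𝕜] {c : ℕ → 𝕜}
    (h : ∀ᶠ z in 𝓝 (0 : 𝕜), HasSum (fun n => z ^ n • c n) 0) : c = 0 := by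
  have hp : HasFPowerSeriesAt (0 : 𝕜 → 𝕜) (FormalMultilinearSeries.ofScalars 𝕜 c) 0 :=
    hasFPowerSeriesAt_iff.2 (by simpa [FormalMultilinearSeries.coeff_ofScalars] using h)
  exact (FormalMultilinearSeries.ofScalars_series_eq_zero 𝕜).1 hp.eq_zero

theorem coeff_recurrence_of_functional_eq
    {f : ℂ → ℂ} {β lam : ℂ} {a : ℕ → ℂ}
    (hsum : ∀ᶠ z in 𝓝 0, HasSum (fun n => z ^ n • a n) (f z))
    (heq : ∀ᶠ z in 𝓝 0, z * f (β * z) - lam * f z = 1) :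
    lam * a 0 = -1 ∧ ∀ n, lam * a (n + 1) = β ^ n * a n := by
  -- the Taylor coefficients of `lam * f z + 1 - z * f (β * z)`
  let c : ℕ → ℂ
    | 0 => lam * a 0 + 1
    | n + 1 => lam * a (n + 1) - β ^ n * a n
  have hβsum : ∀ᶠ z in 𝓝 0, HasSum (fun n => (β * z) ^ n • a n) (f (β * z)) :=
    ((continuous_const_mul β).tendsto' 0 0 (mul_zero β)).eventually hsum
  have hc : ∀ n, c n = 0 := congrFun <| by
    refine eq_zero_of_eventually_hasSum_pow_smul_zero ?_
    filter_upwards [hsum, hβsum, heq] with z hz hβz hzeq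
    have htail := ((hasSum_nat_add_iff' 1).2 (hz.mul_left lam)).sub (hβz.mul_left z)
    replace htail : HasSum (fun n => z ^ (n + 1) • c (n + 1))
        (lam * f z - lam * a 0 - z * f (β * z)) := by
      simp only [Finset.sum_range_one, pow_zero, one_smul] at htail
      refine htail.congr_fun fun n => ?_
      simp only [c, smul_eq_mul]
      ring
    have hfull := (hasSum_nat_add_iff (f := fun n => z ^ n • c n) 1).1 htail
    rwa [Finset.sum_range_one, pow_zero, one_smul,
      show lam * f z - lam * a 0 - z * f (β * z) + c 0 = 0 by
        simp only [c]; linear_combination -hzeq] at hfull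
  exact ⟨by linear_combination (hc 0 : lam * a 0 + 1 = 0),
    fun n => by linear_combination (hc (n + 1) : lam * a (n + 1) - β ^ n * a n = 0)⟩

theorem norm_pow_mul_norm_eq_one_of_recurrence {β lam : ℂ} {a : ℕ → ℂ} (hβ : ‖β‖ = 1)
    (h₀ : lam * a 0 = -1) (hsucc : ∀ n, lam * a (n + 1) = β ^ n * a n) (n : ℕ) :
    ‖lam‖ ^ (n + 1) * ‖a n‖ = 1 := by
  induction n with
  | zero => simpa using congrArg norm h₀
  | succ n ih =>
    calc ‖lam‖ ^ (n + 2) * ‖a (n + 1)‖ = ‖lam‖ ^ (n + 1) * ‖lam * a (n + 1)‖ := by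
          rw [norm_mul]; ring
      _ = 1 := by rw [hsucc, norm_mul, norm_pow, hβ, one_pow, one_mul, ih]

theorem not_summable_pow_smul_of_norm_pow_mul_norm_eq_one {lam : ℂ} {a : ℕ → ℂ}
    (h : ∀ n, ‖lam‖ ^ (n + 1) * ‖a n‖ = 1) : ¬ Summable (fun n => lam ^ n • a n) := by
  intro hs
  have hlim : Tendsto (fun n => ‖lam ^ n • a n‖ * ‖lam‖) atTop (𝓝 (‖(0 : ℂ)‖ * ‖lam‖)) :=
    hs.tendsto_atTop_zero.norm.mul_const _
  have hone : (fun n => ‖lam ^ n • a n‖ * ‖lam‖) = fun _ => 1 := by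
    funext n
    rw [← h n, norm_smul, norm_pow, pow_succ]
    ring
  rw [hone, norm_zero, zero_mul] at hlim
  exact one_ne_zero (tendsto_nhds_unique tendsto_const_nhds hlim)

theorem stmt_17_general (β : ℂ) (hβ : ‖β‖ = 1)
    (lam : ℂ) (hlam1 : ‖lam‖ < 1) :
    ¬ ∃ f : ℂ → ℂ, DifferentiableOn ℂ f (ball (0:ℂ) 1) ∧
      ∀ z ∈ ball (0:ℂ) 1, z * f (β * z) - lam * f z = 1 := by
  rintro ⟨f, hf, heq⟩
  set a : ℕ → ℂ := fun n => (n ! : ℂ)⁻¹ * iteratedDeriv n f 0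
  have hsum : ∀ z ∈ ball (0 : ℂ) 1, HasSum (fun n => z ^ n • a n) (f z) := fun z hz => by
    simpa [a, mul_left_comm] using Complex.hasSum_taylorSeries_on_ball hf hz
  have hball : ball (0 : ℂ) 1 ∈ 𝓝 0 := ball_mem_nhds 0 one_pos
  obtain ⟨h₀, hsucc⟩ := coeff_recurrence_of_functional_eq
    (eventually_of_mem hball hsum) (eventually_of_mem hball heq)
  exact not_summable_pow_smul_of_norm_pow_mul_norm_eq_one
    (norm_pow_mul_norm_eq_one_of_recurrence hβ h₀ hsucc) (hsum lam (by simpa)).summable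

theorem stmt_17 (β : ℂ) (hβ : ‖β‖ = 1)
    (haper : ∀ n : ℕ, 1 ≤ n → β ^ n ≠ 1)
    (lam : ℂ) (hlam0 : 0 < ‖lam‖) (hlam1 : ‖lam‖ < 1) :
    ¬ ∃ f : ℂ → ℂ, DifferentiableOn ℂ f (ball (0:ℂ) 1) ∧
      ∀ z ∈ ball (0:ℂ) 1, z * f (β * z) - lam * f z = 1 :=
  stmt_17_general β hβ lam hlam1
end
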